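/- Let $q \geq 2$, $m \geq 3$ be integers and let $t_m(x) = m x^4 + m x^3 - x^2 + m x + m$. Then for all integers $k$ with $q^k > m$, we have $s_q(t_m(q^k)) = (q-1)k + s_q(m-1) + 3 s_q(m)$. -/
import Mathlib


/-- `digitSum q n` is the sum of digits of `n` in base `q`. -/
def digitSum (q n : ℕ) : ℕ := (Nat.digits q n).sum

lemma digitSum_def {q : ℕ} (hq : 1 < q) (n : ℕ) :
    digitSum q n = n % q + digitSum q (n / q) := by
  rcases Nat.eq_zero_or_pos n with h | h
  · simp [h, digitSum]
  · rw [digitSum, Nat.digits_def' hq h]; simp [digitSum]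

lemma digitSum_add_pow_mul (q : ℕ) (hq : 2 ≤ q) :
    ∀ (k a b : ℕ), a < q ^ k → digitSum q (a + q ^ k * b) = digitSum q a + digitSum q b := by
  intro k
  induction k with
  | zero =>
    intro a b ha
    simp only [pow_zero] at ha ⊢
    have : a = 0 := by omega
    simp [this, digitSum]
  | succ k ih =>
    intro a b ha
    have hq0 : 0 < q := by omega
    have hmod : (a + q ^ (k + 1) * b) % q = a % q := by
      rw [pow_succ, mul_comm (q ^ k) q, mul_assoc, Nat.add_mul_mod_self_left]
    have hdiv : (a + q ^ (k + 1) * b) / q = a / q + q ^ k * b := by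
      rw [pow_succ, mul_comm (q ^ k) q, mul_assoc, Nat.add_mul_div_left _ _ hq0]
    have hlt : a / q < q ^ k := by
      rw [Nat.div_lt_iff_lt_mul hq0]
      rw [pow_succ] at ha; exact ha
    rw [digitSum_def (by omega) (a + q ^ (k + 1) * b), hmod, hdiv, ih _ b hlt,
      digitSum_def (by omega) a]
    ring

lemma digitSum_pow_sub_one (q : ℕ) (hq : 2 ≤ q) (k : ℕ) :
    digitSum q (q ^ k - 1) = (q - 1) * k := by
  induction k with
  | zero => simp [digitSum]
  | succ k ih =>
    have h1 : 1 ≤ q ^ k := Nat.one_le_pow _ _ (by omega)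
    have : q ^ (k + 1) - 1 = (q - 1) + q ^ 1 * (q ^ k - 1) := by
      obtain ⟨c, hc⟩ : ∃ c, q ^ k = c + 1 := ⟨q ^ k - 1, by omega⟩
      rw [pow_succ, pow_one, hc]
      have h2 : (c + 1) * q = c * q + q := by ring
      have h3 : q * (c + 1 - 1) = c * q := by simp [mul_comm]
      rw [h2, h3]
      omega
    rw [this, digitSum_add_pow_mul q hq 1 _ _ (by simpa using Nat.sub_lt (by omega) one_pos),
      digitSum_def (by omega : 1 < q) (q - 1), Nat.mod_eq_of_lt (by omega),
      Nat.div_eq_of_lt (by omega), ih]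
    simp [digitSum]
    ring

theorem stmt_9 (q m k : ℕ) (hq : 2 ≤ q) (hm : 3 ≤ m) (hk : m < q ^ k) :
    digitSum q ((m * ((q : ℤ) ^ k) ^ 4 + m * ((q : ℤ) ^ k) ^ 3 - ((q : ℤ) ^ k) ^ 2
        + m * (q : ℤ) ^ k + m).toNat) =
      (q - 1) * k + digitSum q (m - 1) + 3 * digitSum q m := by
  set Q := q ^ k with hQ
  have hQ1 : 1 ≤ Q := Nat.one_le_pow _ _ (by omega)
  set N : ℕ := m + Q * (m + Q * ((Q - 1) + Q * ((m - 1) + Q * m))) with hN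
  have hcast : (m * ((q : ℤ) ^ k) ^ 4 + m * ((q : ℤ) ^ k) ^ 3 - ((q : ℤ) ^ k) ^ 2
        + m * (q : ℤ) ^ k + m) = (N : ℤ) := by
    have h1 : ((Q - 1 : ℕ) : ℤ) = (Q : ℤ) - 1 := by
      push_cast [Nat.cast_sub hQ1]; ring
    have h2 : ((m - 1 : ℕ) : ℤ) = (m : ℤ) - 1 := by
      push_cast [Nat.cast_sub (by omega : 1 ≤ m)]; ring
    have hQc : ((Q : ℕ) : ℤ) = (q : ℤ) ^ k := by push_cast [hQ]; ring
    rw [hN]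
    push_cast [h1, h2, hQc]
    ring
  rw [hcast, Int.toNat_natCast]
  have e1 := digitSum_add_pow_mul q hq k m (m + Q * ((Q - 1) + Q * ((m - 1) + Q * m))) hk
  have e2 := digitSum_add_pow_mul q hq k m ((Q - 1) + Q * ((m - 1) + Q * m)) hk
  have e3 := digitSum_add_pow_mul q hq k (Q - 1) ((m - 1) + Q * m) (by omega)
  have e4 := digitSum_add_pow_mul q hq k (m - 1) m (by omega)
  rw [hN, e1, e2, e3, e4, digitSum_pow_sub_one q hq k]
  ring
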